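/- Let f : ℝ → ℝ be continuous and define for each x in an open set O ⊆ ℝ^d and a C¹ function u : O → ℝ vanishing outside a compact subset, F(y) = ∫₀^y f(y') dy'. Then div_x[F(u(x))] = f(u(x))·∇u(x) and consequently ∫_O f(u(x))·∇u(x) dx = 0. -/

import Mathlib

open MeasureTheory

/-!
By the fundamental theorem of calculus `F' = f`, so the chain rule gives the divergence identity
componentwise. The integrand vanishes off `tsupport u ⊆ O` together with `∇u`, and by that
identity it is a sum of directional derivatives of the compactly supported `C¹` functions
`z ↦ F (u z) i`, each of which integrates to zero by integration by parts against the constant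
function `1`.
-/

section

variable {E G : Type*} [NormedAddCommGroup E] [NormedSpace ℝ E] [MeasurableSpace E]
  [BorelSpace E] {μ : Measure E} [NormedAddCommGroup G] [NormedSpace ℝ G]

theorem ContDiff.integrable_fderiv_apply [IsFiniteMeasureOnCompacts μ] {g : E → G}
    (hg : ContDiff ℝ 1 g) (hsupp : HasCompactSupport g) (v : E) :
    Integrable (fun x ↦ fderiv ℝ g x v) μ :=
  (hg.continuous_fderiv_apply one_ne_zero |>.comp (continuous_id.prodMk continuous_const))
    |>.integrable_of_hasCompactSupport (hsupp.fderiv_apply ℝ v)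

variable [FiniteDimensional ℝ E] [μ.IsAddHaarMeasure]

theorem ContDiff.integral_fderiv_apply_eq_zero {g : E → G} (hg : ContDiff ℝ 1 g)
    (hsupp : HasCompactSupport g) (v : E) : ∫ x, fderiv ℝ g x v ∂μ = 0 := by
  have h := integral_smul_fderiv_eq_neg_fderiv_smul_of_integrable (μ := μ)
    (f := fun _ ↦ (1 : ℝ)) (g := g) (v := v) (by simp)
    (by simpa using hg.integrable_fderiv_apply hsupp v)
    (by simpa using hg.continuous.integrable_of_hasCompactSupport hsupp)
    (fun x _ ↦ differentiableAt_const _) (fun x _ ↦ hg.differentiable one_ne_zero x)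
  simpa using h

theorem integral_sum_fderiv_apply_eq_zero {ι : Type*} (s : Finset ι) {g : ι → E → G}
    (hg : ∀ i, ContDiff ℝ 1 (g i)) (hsupp : ∀ i, HasCompactSupport (g i)) (v : ι → E) :
    ∫ x, ∑ i ∈ s, fderiv ℝ (g i) x (v i) ∂μ = 0 := by
  rw [integral_finsetSum s fun i _ ↦ (hg i).integrable_fderiv_apply (hsupp i) (v i)]
  exact Finset.sum_eq_zero fun i _ ↦ (hg i).integral_fderiv_apply_eq_zero (hsupp i) (v i)

end

theorem fderiv_comp_apply_of_hasDerivAt {E : Type*} [NormedAddCommGroup E] [NormedSpace ℝ E]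
    {φ : ℝ → ℝ} {φ' : ℝ} {u : E → ℝ} {x : E} (hφ : HasDerivAt φ φ' (u x))
    (hu : DifferentiableAt ℝ u x) (v : E) :
    fderiv ℝ (fun z ↦ φ (u z)) x v = φ' * fderiv ℝ u x v :=
  congrArg (· v) (hφ.comp_hasFDerivAt x hu.hasFDerivAt).fderiv

theorem contDiff_one_of_hasDerivAt {E : Type*} [NormedAddCommGroup E] [NormedSpace ℝ E]
    {φ φ' : ℝ → E} (hφ : ∀ y, HasDerivAt φ (φ' y) y) (hφ' : Continuous φ') :
    ContDiff ℝ 1 φ := by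
  refine contDiff_one_iff_deriv.2 ⟨fun y ↦ (hφ y).differentiableAt, ?_⟩
  rwa [funext fun y ↦ (hφ y).deriv]

theorem divergence_antiderivative_vanishes_general
    (d : ℕ) (O : Set (Fin d → ℝ))
    (f : ℝ → Fin d → ℝ) (hf : Continuous f)
    (u : (Fin d → ℝ) → ℝ) (hu : ContDiff ℝ 1 u)
    (husupp : HasCompactSupport u) (husub : tsupport u ⊆ O)
    (F : ℝ → Fin d → ℝ) (hF : ∀ y : ℝ, F y = ∫ t in (0:ℝ)..y, f t) :
    (∀ x : Fin d → ℝ,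
        ∑ i, fderiv ℝ (fun z => F (u z) i) x (Pi.single i 1)
          = ∑ i, f (u x) i * fderiv ℝ u x (Pi.single i 1)) ∧
      (∫ x in O, ∑ i, f (u x) i * fderiv ℝ u x (Pi.single i 1)) = 0 := by
  have hF' (y : ℝ) : HasDerivAt F (f y) y := by
    rw [funext hF]
    exact (hf.integral_hasStrictDerivAt 0 y).hasDerivAt
  have hdiv (x : Fin d → ℝ) : ∑ i, fderiv ℝ (fun z ↦ F (u z) i) x (Pi.single i 1)
      = ∑ i, f (u x) i * fderiv ℝ u x (Pi.single i 1) :=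
    Finset.sum_congr rfl fun i _ ↦ fderiv_comp_apply_of_hasDerivAt (hasDerivAt_pi.1 (hF' (u x)) i)
      (hu.differentiable one_ne_zero x) (Pi.single i 1)
  refine ⟨hdiv, ?_⟩
  have hvanish (x) (hx : x ∉ O) : ∑ i, f (u x) i * fderiv ℝ u x (Pi.single i 1) = 0 := by
    simp [fderiv_of_notMem_tsupport ℝ fun h ↦ hx (husub h)]
  have hFu : ContDiff ℝ 1 (F ∘ u) := (contDiff_one_of_hasDerivAt hF' hf).comp hu
  have hFu_apply (i : Fin d) : ContDiff ℝ 1 fun z ↦ F (u z) i := (contDiff_apply ℝ ℝ i).comp hFu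
  have hFu_supp (i : Fin d) : HasCompactSupport fun z ↦ F (u z) i :=
    husupp.comp_left (g := fun y ↦ F y i) (by simp [hF])
  rw [setIntegral_eq_integral_of_forall_compl_eq_zero hvanish]
  simp_rw [← hdiv]
  exact integral_sum_fderiv_apply_eq_zero _ hFu_apply hFu_supp _

/-- Lemma 5.6(1): for continuous `f : ℝ → ℝ^d`, `F(y) = ∫₀^y f`, and a `C¹` function
`u` compactly supported in an open set `O ⊆ ℝ^d`, the spatial divergence of
`x ↦ F(u(x))` equals `f(u(x))·∇u(x)`, and consequently `∫_O f(u(x))·∇u(x) dx = 0`. -/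
theorem divergence_antiderivative_vanishes
    (d : ℕ) (O : Set (Fin d → ℝ)) (hO : IsOpen O)
    (f : ℝ → Fin d → ℝ) (hf : Continuous f)
    (u : (Fin d → ℝ) → ℝ) (hu : ContDiff ℝ 1 u)
    (husupp : HasCompactSupport u) (husub : tsupport u ⊆ O)
    (F : ℝ → Fin d → ℝ) (hF : ∀ y : ℝ, F y = ∫ t in (0:ℝ)..y, f t) :
    (∀ x : Fin d → ℝ,
        ∑ i, fderiv ℝ (fun z => F (u z) i) x (Pi.single i 1)
          = ∑ i, f (u x) i * fderiv ℝ u x (Pi.single i 1)) ∧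
      (∫ x in O, ∑ i, f (u x) i * fderiv ℝ u x (Pi.single i 1)) = 0 :=
  divergence_antiderivative_vanishes_general d O f hf u hu husupp husub F hF
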